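/- arXiv:1901.01526 — 3 statements merged into one kernel-verified Lean document; each statement's English description precedes it below -/
import Mathlib

section
/- Let γ₁ and γ₂ be finite loops in a directed graph with integer-weighted edges, both starting and ending at the same vertex α. If r is a rational number with W(γ₁)/L(γ₁) ≤ r ≤ W(γ₂)/L(γ₂) (where W denotes the sum of edge weights along a path and L its length), then there exists a loop γ starting at α with W(γ)/L(γ) = r. -/
/-!
Repeating `γ₁` `a` times and then `γ₂` `b` times gives a loop at `α` whose rotation number is
the weighted mediant `(a W(γ₁) + b W(γ₂)) / (a L(γ₁) + b L(γ₂))`. This equals `r` exactly when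
`a (r L(γ₁) - W(γ₁)) = b (W(γ₂) - r L(γ₂))`; both brackets are nonnegative rationals, so such
`a, b ∈ ℕ`, not both zero, exist.
-/

theorem exists_nat_mediant_eq {x₁ x₂ r : ℚ} {n₁ n₂ : ℕ} (hn₁ : 0 < n₁) (hn₂ : 0 < n₂)
    (h₁ : x₁ / n₁ ≤ r) (h₂ : r ≤ x₂ / n₂) :
    ∃ a b : ℕ, 0 < a * n₁ + b * n₂ ∧
      (a * x₁ + b * x₂) / (a * n₁ + b * n₂) = r := by
  have hn₁' : (0 : ℚ) < n₁ := by exact_mod_cast hn₁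
  have hn₂' : (0 : ℚ) < n₂ := by exact_mod_cast hn₂
  rcases h₁.eq_or_lt with h₁ | h₁
  · exact ⟨1, 0, by omega, by simpa using h₁⟩
  set d₁ := r * n₁ - x₁
  set d₂ := x₂ - r * n₂
  have hd₁ : 0 < d₁ := by rw [div_lt_iff₀ hn₁'] at h₁; linarith
  have hd₂ : 0 ≤ d₂ := by rw [le_div_iff₀ hn₂'] at h₂; linarith
  obtain ⟨t, ht⟩ : ∃ t : ℚ≥0, (t : ℚ) = d₂ / d₁ :=
    ⟨_, Rat.coe_toNNRat _ (div_nonneg hd₂ hd₁.le)⟩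
  rw [← NNRat.num_div_den t] at ht
  push_cast at ht
  refine ⟨t.num, t.den, by have := Nat.mul_pos t.den_pos hn₂; omega, ?_⟩
  have hbalance : (t.num : ℚ) * d₁ = t.den * d₂ := by
    rw [div_eq_div_iff (by positivity) hd₁.ne'] at ht; linarith
  rw [div_eq_iff (by positivity)]
  linear_combination -hbalance

namespace WeightedDigraph

variable {V : Type*}

def IsPath (Adj : V → V → Prop) (f : ℕ → V) (n : ℕ) : Prop :=
  ∀ i < n, Adj (f i) (f (i + 1))

def IsLoopAt (Adj : V → V → Prop) (α : V) (f : ℕ → V) (n : ℕ) : Prop :=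
  f 0 = α ∧ f n = α ∧ IsPath Adj f n

def pathWeight (W : V → V → ℤ) (f : ℕ → V) (n : ℕ) : ℤ :=
  ∑ i ∈ Finset.range n, W (f i) (f (i + 1))

def pathAppend (f g : ℕ → V) (n : ℕ) (k : ℕ) : V :=
  if k < n then f k else g (k - n)

section Append

variable {f g : ℕ → V} {n m : ℕ}

theorem pathAppend_of_lt {k : ℕ} (hk : k < n) : pathAppend f g n k = f k := if_pos hk

theorem pathAppend_add (k : ℕ) : pathAppend f g n (n + k) = g k := by
  simp [pathAppend]

theorem pathAppend_of_le (hjoin : f n = g 0) {k : ℕ} (hk : k ≤ n) :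
    pathAppend f g n k = f k := by
  rcases hk.lt_or_eq with hk | rfl
  · exact pathAppend_of_lt hk
  · simpa [pathAppend] using hjoin.symm

theorem IsPath.append {Adj : V → V → Prop} (hf : IsPath Adj f n) (hg : IsPath Adj g m)
    (hjoin : f n = g 0) : IsPath Adj (pathAppend f g n) (n + m) := by
  intro i hi
  rcases lt_or_ge i n with hin | hni
  · rw [pathAppend_of_lt hin, pathAppend_of_le hjoin hin]
    exact hf i hin
  · obtain ⟨k, rfl⟩ := Nat.exists_eq_add_of_le hni
    rw [add_assoc, pathAppend_add, pathAppend_add]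
    exact hg k (by omega)

theorem pathWeight_append (W : V → V → ℤ) (hjoin : f n = g 0) :
    pathWeight W (pathAppend f g n) (n + m) = pathWeight W f n + pathWeight W g m := by
  unfold pathWeight
  rw [Finset.sum_range_add]
  congr 1
  · refine Finset.sum_congr rfl fun i hi => ?_
    have hi : i < n := Finset.mem_range.mp hi
    rw [pathAppend_of_lt hi, pathAppend_of_le hjoin hi]
  · simp only [add_assoc, pathAppend_add]

end Append

section Loops

variable {Adj : V → V → Prop} {α : V} {f g : ℕ → V} {n m : ℕ}

theorem IsLoopAt.append (hf : IsLoopAt Adj α f n) (hg : IsLoopAt Adj α g m) :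
    IsLoopAt Adj α (pathAppend f g n) (n + m) := by
  obtain ⟨hf0, hfn, hf⟩ := hf
  obtain ⟨hg0, hgm, hg⟩ := hg
  have hjoin : f n = g 0 := hfn.trans hg0.symm
  refine ⟨?_, ?_, hf.append hg hjoin⟩
  · rw [pathAppend_of_le hjoin n.zero_le, hf0]
  · rw [pathAppend_add, hgm]

theorem IsLoopAt.exists_repeat (W : V → V → ℤ) (hf : IsLoopAt Adj α f n) (k : ℕ) :
    ∃ g, IsLoopAt Adj α g (k * n) ∧ pathWeight W g (k * n) = k * pathWeight W f n := by
  induction k with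
  | zero => exact ⟨fun _ => α, ⟨rfl, rfl, fun _ h => by simp at h⟩, by simp [pathWeight]⟩
  | succ k ih =>
    obtain ⟨g, hg, hgw⟩ := ih
    refine ⟨pathAppend g f (k * n), ?_, ?_⟩
    · rw [Nat.succ_mul]; exact hg.append hf
    · rw [Nat.succ_mul, pathWeight_append W (hg.2.1.trans hf.1.symm), hgw]
      push_cast; ring

end Loops

end WeightedDigraph

open WeightedDigraph in
/-- If `γ₁`, `γ₂` are loops at a vertex `α` of a directed graph with
integer edge weights `W`, and `r` is a rational number between the rotation numbers
`W(γ₁)/L(γ₁)` and `W(γ₂)/L(γ₂)`, then there is a loop `γ` at `α` with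
`W(γ)/L(γ) = r`. -/
theorem loop_rotation_intermediate {V : Type*} (Adj : V → V → Prop) (W : V → V → ℤ)
    (α : V) (f₁ f₂ : ℕ → V) (n₁ n₂ : ℕ) (hn₁ : 0 < n₁) (hn₂ : 0 < n₂)
    (hf₁0 : f₁ 0 = α) (hf₁n : f₁ n₁ = α) (hf₁adj : ∀ i < n₁, Adj (f₁ i) (f₁ (i + 1)))
    (hf₂0 : f₂ 0 = α) (hf₂n : f₂ n₂ = α) (hf₂adj : ∀ i < n₂, Adj (f₂ i) (f₂ (i + 1)))
    (r : ℚ)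
    (hr₁ : ((∑ i ∈ Finset.range n₁, W (f₁ i) (f₁ (i + 1)) : ℤ) : ℚ) / (n₁ : ℚ) ≤ r)
    (hr₂ : r ≤ ((∑ i ∈ Finset.range n₂, W (f₂ i) (f₂ (i + 1)) : ℤ) : ℚ) / (n₂ : ℚ)) :
    ∃ (f : ℕ → V) (n : ℕ), 0 < n ∧ f 0 = α ∧ f n = α ∧
      (∀ i < n, Adj (f i) (f (i + 1))) ∧
      ((∑ i ∈ Finset.range n, W (f i) (f (i + 1)) : ℤ) : ℚ) / (n : ℚ) = r := by
  obtain ⟨a, b, hpos, hmediant⟩ := exists_nat_mediant_eq hn₁ hn₂ hr₁ hr₂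
  obtain ⟨g₁, hg₁, hw₁⟩ := IsLoopAt.exists_repeat W ⟨hf₁0, hf₁n, hf₁adj⟩ a
  obtain ⟨g₂, hg₂, hw₂⟩ := IsLoopAt.exists_repeat W ⟨hf₂0, hf₂n, hf₂adj⟩ b
  obtain ⟨h0, hn, hadj⟩ := hg₁.append hg₂
  refine ⟨pathAppend g₁ g₂ (a * n₁), a * n₁ + b * n₂, hpos, h0, hn, hadj, ?_⟩
  have hweight := pathWeight_append W (hg₁.2.1.trans hg₂.1.symm) (m := b * n₂)
  rw [hw₁, hw₂] at hweight
  unfold pathWeight at hweight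
  rw [hweight]
  exact_mod_cast hmediant
end

section
/- Let α be a vertex of a directed graph with integer-weighted edges and let (γₙ)ₙ≥0 be a sequence of loops starting at α such that the rotation numbers W(γₙ)/L(γₙ) converge to a real number s. Then there exists an infinite path ᾱ = (αₙ)ₙ≥0 starting at α, passing through α infinitely many times, whose rotation number lim_{n→∞} W(α₀…αₙ)/n exists and equals s. -/
/-!
Follow `γ₀` repeated `R₀` times, then `γ₁` repeated `R₁` times, and so on. Within the block of
`γₖ`, the weight of the first `m` edges differs from `m s` by at most `m εₖ + Bₖ`, where
`εₖ = |W(γₖ)/L(γₖ) - s| → 0` and `Bₖ` is the sum of `|W(e) - s|` over the edges `e` of `γₖ`.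
If `Rₖ` is at least `k + 1` times the deviation bound accumulated before block `k` plus
`B₀ + ⋯ + Bₖ₊₁` (a recursive choice), the deviation at any time `n` inside block `k + 1` is at
most `n (1/(k+1) + εₖ + εₖ₊₁)`, so the rotation number is `s`.
-/

open Filter Topology Finset

theorem sum_range_mod {M : Type*} [AddCommMonoid M] (y : ℕ → M) (L m : ℕ) :
    ∑ i ∈ range m, y (i % L) = (m / L) • ∑ j ∈ range L, y j + ∑ j ∈ range (m % L), y j := by
  have periods : ∀ q, ∑ i ∈ range (L * q), y (i % L) = q • ∑ j ∈ range L, y j := by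
    intro q
    induction q with
    | zero => simp
    | succ q ih =>
      rw [Nat.mul_succ, sum_range_add, ih, succ_nsmul]
      congr 1
      refine sum_congr rfl fun j hj => ?_
      rw [Nat.add_mod, Nat.mul_mod_right, zero_add, Nat.mod_mod, Nat.mod_eq_of_lt (mem_range.mp hj)]
  conv_lhs => rw [← Nat.div_add_mod m L, sum_range_add, periods]
  congr 1
  refine sum_congr rfl fun j hj => ?_
  rw [Nat.add_mod, Nat.mul_mod_right, zero_add, Nat.mod_mod]
  rcases L.eq_zero_or_pos with rfl | hL
  · rw [Nat.mod_zero]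
  · rw [Nat.mod_eq_of_lt ((mem_range.mp hj).trans (Nat.mod_lt m hL))]

theorem abs_sum_range_mod_le (y : ℕ → ℝ) {L : ℕ} (hL : 0 < L) (m : ℕ) :
    |∑ i ∈ range m, y (i % L)| ≤ m * |(∑ j ∈ range L, y j) / L| + ∑ j ∈ range L, |y j| := by
  set S := ∑ j ∈ range L, y j
  have hL' : (L : ℝ) ≠ 0 := by positivity
  have full_periods : |((m / L : ℕ) : ℝ) * S| = ((m / L : ℕ) : ℝ) * L * |S / L| := by
    rw [abs_mul, Nat.abs_cast, abs_div, Nat.abs_cast, mul_assoc, mul_div_cancel₀ _ hL']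
  have full_periods_le : ((m / L : ℕ) : ℝ) * L ≤ m := by exact_mod_cast Nat.div_mul_le_self m L
  have remainder : |∑ j ∈ range (m % L), y j| ≤ ∑ j ∈ range L, |y j| :=
    (abs_sum_le_sum_abs _ _).trans <| sum_le_sum_of_subset_of_nonneg
      (range_subset_range.mpr (Nat.mod_lt m hL).le) fun _ _ _ => abs_nonneg _
  rw [sum_range_mod, nsmul_eq_mul]
  calc |((m / L : ℕ) : ℝ) * S + ∑ j ∈ range (m % L), y j|
      ≤ |((m / L : ℕ) : ℝ) * S| + |∑ j ∈ range (m % L), y j| := abs_add_le _ _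
    _ ≤ m * |S / L| + ∑ j ∈ range L, |y j| := by
        rw [full_periods]
        exact add_le_add (mul_le_mul_of_nonneg_right full_periods_le (abs_nonneg _)) remainder

theorem apply_add_one_mod_of_apply_zero_eq {V : Type*} {γ : ℕ → V} {L : ℕ} (hL : 0 < L)
    (hγ : γ 0 = γ L) (i : ℕ) : γ ((i + 1) % L) = γ (i % L + 1) := by
  rw [← Nat.mod_add_mod]
  rcases Nat.lt_or_eq_of_le (show i % L + 1 ≤ L from Nat.mod_lt i hL) with h | h
  · rw [Nat.mod_eq_of_lt h]
  · rw [h, Nat.mod_self, hγ]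

theorem strictMono_sum_range {ℓ : ℕ → ℕ} (hℓ : ∀ k, 0 < ℓ k) :
    StrictMono fun k => ∑ j ∈ range k, ℓ j :=
  strictMono_nat_of_lt_succ fun k => by
    rw [sum_range_succ]
    exact Nat.lt_add_of_pos_right (hℓ k)

section Blocks

variable {T : ℕ → ℕ}

def blockIndex (T : ℕ → ℕ) (n : ℕ) : ℕ :=
  Nat.findGreatest (fun k => T k ≤ n) n

theorem blockIndex_eq (hT : StrictMono T) {k n : ℕ} (hk : T k ≤ n) (hn : n < T (k + 1)) :
    blockIndex T n = k := by
  refine Nat.findGreatest_eq_iff.mpr ⟨(hT.id_le k).trans hk, fun _ => hk, fun j hkj _ hj => ?_⟩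
  exact (hn.trans_le (hT.monotone hkj)).not_ge hj

theorem blockIndex_mem (hT : StrictMono T) {n : ℕ} (hn : T 0 ≤ n) :
    T (blockIndex T n) ≤ n ∧ n < T (blockIndex T n + 1) := by
  refine ⟨Nat.findGreatest_spec (P := fun k => T k ≤ n) (Nat.zero_le n) hn, ?_⟩
  by_contra! h
  exact Nat.findGreatest_is_greatest (Nat.lt_succ_self _) ((hT.id_le _).trans h) h

theorem tendsto_blockIndex (hT : StrictMono T) : Tendsto (blockIndex T) atTop atTop :=
  tendsto_atTop_atTop.mpr fun K => ⟨T K, fun n hn => by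
    have h := (blockIndex_mem hT ((hT.monotone (Nat.zero_le K)).trans hn)).2
    exact Nat.lt_succ_iff.mp (hT.lt_iff_lt.mp (hn.trans_lt h))⟩

theorem tendsto_zero_of_forall_block {u G : ℕ → ℝ} (hT : StrictMono T)
    (hG : Tendsto G atTop (𝓝 0)) (hu : ∀ k n, T k ≤ n → n < T (k + 1) → |u n| ≤ G k) :
    Tendsto u atTop (𝓝 0) := by
  refine squeeze_zero_norm' ?_ (hG.comp (tendsto_blockIndex hT))
  filter_upwards [eventually_ge_atTop (T 0)] with n hn
  exact hu _ n (blockIndex_mem hT hn).1 (blockIndex_mem hT hn).2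

/-- The concatenation of the paths `γ k`, the `k`-th one occupying positions `[T k, T (k + 1))`. -/
def blockConcat {V : Type*} (γ : ℕ → ℕ → V) (T : ℕ → ℕ) (n : ℕ) : V :=
  γ (blockIndex T n) (n - T (blockIndex T n))

variable {V : Type*} {γ : ℕ → ℕ → V}

theorem blockConcat_of_mem (hT : StrictMono T) {k n : ℕ} (hk : T k ≤ n) (hn : n < T (k + 1)) :
    blockConcat γ T n = γ k (n - T k) := by
  rw [blockConcat, blockIndex_eq hT hk hn]

theorem blockConcat_succ_of_mem (hT : StrictMono T)
    (hjoin : ∀ k, γ (k + 1) 0 = γ k (T (k + 1) - T k)) {k n : ℕ} (hk : T k ≤ n)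
    (hn : n < T (k + 1)) : blockConcat γ T (n + 1) = γ k (n + 1 - T k) := by
  rcases (show n + 1 ≤ T (k + 1) from hn).lt_or_eq with h | h
  · exact blockConcat_of_mem hT (hk.trans n.le_succ) h
  · rw [h, blockConcat_of_mem hT le_rfl (hT (Nat.lt_succ_self _)), Nat.sub_self, hjoin]

end Blocks

section BlockAverages

variable {x ε B : ℕ → ℝ} {ℓ : ℕ → ℕ}

theorem abs_sum_range_blockStart_le
    (hblock : ∀ k m, m ≤ ℓ k → |∑ i ∈ range m, x (∑ j ∈ range k, ℓ j + i)| ≤ m * ε k + B k)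
    (k : ℕ) : |∑ i ∈ range (∑ j ∈ range k, ℓ j), x i| ≤ ∑ j ∈ range k, (ℓ j * ε j + B j) := by
  induction k with
  | zero => simp
  | succ k ih =>
    rw [sum_range_succ ℓ, sum_range_add, sum_range_succ]
    exact (abs_add_le _ _).trans (add_le_add ih (hblock k (ℓ k) le_rfl))

theorem abs_sum_range_le_of_mem_block (hε0 : ∀ k, 0 ≤ ε k)
    (hblock : ∀ k m, m ≤ ℓ k → |∑ i ∈ range m, x (∑ j ∈ range k, ℓ j + i)| ≤ m * ε k + B k)
    (hgrowth : ∀ k : ℕ,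
      (k + 1) * (∑ j ∈ range k, ℓ j * ε j + ∑ j ∈ range (k + 2), B j) ≤ ℓ k)
    {k n : ℕ} (hk : ∑ j ∈ range (k + 1), ℓ j ≤ n) (hn : n < ∑ j ∈ range (k + 2), ℓ j) :
    |∑ i ∈ range n, x i| ≤ n * (1 / (k + 1) + ε k + ε (k + 1)) := by
  obtain ⟨m, hnm⟩ := Nat.exists_eq_add_of_le hk
  have hm : m ≤ ℓ (k + 1) := by rw [sum_range_succ ℓ (k + 1)] at hn; omega
  have hℓk : ℓ k ≤ n := (single_le_sum (fun _ _ => Nat.zero_le _) (self_mem_range_succ k)).trans hk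
  have hmn : m ≤ n := by omega
  have hprev : ∑ j ∈ range k, ℓ j * ε j + ∑ j ∈ range (k + 2), B j ≤ n / (k + 1) := by
    rw [le_div_iff₀ (by positivity), mul_comm]
    exact (hgrowth k).trans (by exact_mod_cast hℓk)
  have hℓε : ℓ k * ε k ≤ n * ε k := by gcongr; exact hε0 k
  have hmε : m * ε (k + 1) ≤ n * ε (k + 1) := by gcongr; exact hε0 (k + 1)
  calc |∑ i ∈ range n, x i|
      ≤ ∑ j ∈ range (k + 1), (ℓ j * ε j + B j) + (m * ε (k + 1) + B (k + 1)) := by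
        rw [hnm, sum_range_add]
        exact (abs_add_le _ _).trans
          (add_le_add (abs_sum_range_blockStart_le hblock (k + 1)) (hblock (k + 1) m hm))
    _ = (∑ j ∈ range k, ℓ j * ε j + ∑ j ∈ range (k + 2), B j) + ℓ k * ε k
          + m * ε (k + 1) := by
        rw [sum_add_distrib, sum_range_succ (fun j => (ℓ j : ℝ) * ε j), sum_range_succ B (k + 1)]
        ring
    _ ≤ n * (1 / (k + 1) + ε k + ε (k + 1)) := by
        rw [mul_add, mul_add, mul_one_div]
        linarith

theorem tendsto_sum_range_div_of_blocks (hℓ : ∀ k, 0 < ℓ k) (hε0 : ∀ k, 0 ≤ ε k)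
    (hε : Tendsto ε atTop (𝓝 0))
    (hblock : ∀ k m, m ≤ ℓ k → |∑ i ∈ range m, x (∑ j ∈ range k, ℓ j + i)| ≤ m * ε k + B k)
    (hgrowth : ∀ k : ℕ,
      (k + 1) * (∑ j ∈ range k, ℓ j * ε j + ∑ j ∈ range (k + 2), B j) ≤ ℓ k) :
    Tendsto (fun n => (∑ i ∈ range n, x i) / n) atTop (𝓝 0) := by
  have hG : Tendsto (fun k : ℕ => 1 / ((k : ℝ) + 1) + ε k + ε (k + 1)) atTop (𝓝 0) := by
    simpa using (tendsto_one_div_add_atTop_nhds_zero_nat.add hε).add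
      (hε.comp (tendsto_add_atTop_nat 1))
  refine tendsto_zero_of_forall_block (T := fun k => ∑ j ∈ range (k + 1), ℓ j)
    (strictMono_nat_of_lt_succ fun k => strictMono_sum_range hℓ (Nat.lt_succ_self _)) hG
    fun k n hk hn => ?_
  have hn0 : (0 : ℝ) < n := Nat.cast_pos.mpr <| (hℓ k).trans_le <|
    (single_le_sum (fun _ _ => Nat.zero_le _) (self_mem_range_succ k)).trans hk
  rw [abs_div, Nat.abs_cast, div_le_iff₀ hn0, mul_comm]
  exact abs_sum_range_le_of_mem_block hε0 hblock hgrowth hk hn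

end BlockAverages

section ConcatPowers

variable {V : Type*} {g : ℕ → ℕ → V} {L R : ℕ → ℕ} {α : V}

/-- The path `γ₀^{R 0} γ₁^{R 1} ⋯`, where `g k` is the loop `γₖ` of length `L k`. -/
def concatPowers (g : ℕ → ℕ → V) (L R : ℕ → ℕ) : ℕ → V :=
  blockConcat (fun k i => g k (i % L k)) fun k => ∑ j ∈ range k, R j * L j

theorem concatPowers_blockStart (hL : ∀ k, 0 < L k) (hR : ∀ k, 0 < R k) (hg0 : ∀ k, g k 0 = α)
    (k : ℕ) : concatPowers g L R (∑ j ∈ range k, R j * L j) = α := by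
  have hT := strictMono_sum_range fun k => Nat.mul_pos (hR k) (hL k)
  rw [concatPowers, blockConcat_of_mem hT le_rfl (hT (Nat.lt_succ_self k)), Nat.sub_self,
    Nat.zero_mod, hg0]

theorem concatPowers_edge (hL : ∀ k, 0 < L k) (hR : ∀ k, 0 < R k) (hg0 : ∀ k, g k 0 = α)
    (hgn : ∀ k, g k (L k) = α) {k i : ℕ} (hi : i < R k * L k) :
    concatPowers g L R (∑ j ∈ range k, R j * L j + i) = g k (i % L k) ∧
      concatPowers g L R (∑ j ∈ range k, R j * L j + i + 1) = g k (i % L k + 1) := by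
  have hT := strictMono_sum_range fun k => Nat.mul_pos (hR k) (hL k)
  have hmem : ∑ j ∈ range k, R j * L j + i < ∑ j ∈ range (k + 1), R j * L j := by
    rw [sum_range_succ]; omega
  have hjoin : ∀ k, g (k + 1) (0 % L (k + 1)) =
      g k ((∑ j ∈ range (k + 1), R j * L j - ∑ j ∈ range k, R j * L j) % L k) := by
    intro k
    rw [sum_range_succ, Nat.add_sub_cancel_left, Nat.mul_mod_left, Nat.zero_mod, hg0, hg0]
  constructor
  · rw [concatPowers, blockConcat_of_mem hT (Nat.le_add_right _ _) hmem, Nat.add_sub_cancel_left]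
  · rw [concatPowers, blockConcat_succ_of_mem hT hjoin (Nat.le_add_right _ _) hmem,
      Nat.add_assoc, Nat.add_sub_cancel_left]
    exact apply_add_one_mod_of_apply_zero_eq (hL k) ((hg0 k).trans (hgn k).symm) i

theorem concatPowers_adj {Adj : V → V → Prop} (hL : ∀ k, 0 < L k) (hR : ∀ k, 0 < R k)
    (hg0 : ∀ k, g k 0 = α) (hgn : ∀ k, g k (L k) = α)
    (hgadj : ∀ k, ∀ i < L k, Adj (g k i) (g k (i + 1))) (n : ℕ) :
    Adj (concatPowers g L R n) (concatPowers g L R (n + 1)) := by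
  have hT := strictMono_sum_range fun k => Nat.mul_pos (hR k) (hL k)
  obtain ⟨hk, hn⟩ := blockIndex_mem hT (n := n) (by simp)
  generalize blockIndex _ n = k at hk hn
  obtain ⟨i, rfl⟩ := Nat.exists_eq_add_of_le hk
  have hi : i < R k * L k := by rw [sum_range_succ] at hn; omega
  obtain ⟨h0, h1⟩ := concatPowers_edge hL hR hg0 hgn hi
  rw [h0, h1]
  exact hgadj k _ (Nat.mod_lt _ (hL k))

theorem sum_concatPowers_edges {M : Type*} [AddCommMonoid M] (F : V → V → M)
    (hL : ∀ k, 0 < L k) (hR : ∀ k, 0 < R k) (hg0 : ∀ k, g k 0 = α) (hgn : ∀ k, g k (L k) = α)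
    {k m : ℕ} (hm : m ≤ R k * L k) :
    ∑ i ∈ range m, F (concatPowers g L R (∑ j ∈ range k, R j * L j + i))
        (concatPowers g L R (∑ j ∈ range k, R j * L j + i + 1)) =
      ∑ i ∈ range m, F (g k (i % L k)) (g k (i % L k + 1)) :=
  sum_congr rfl fun i hi => by
    obtain ⟨h0, h1⟩ := concatPowers_edge hL hR hg0 hgn ((mem_range.mp hi).trans_le hm)
    rw [h0, h1]

end ConcatPowers

theorem exists_pos_seq_ge_partial_sum (a b : ℕ → ℝ) :
    ∃ R : ℕ → ℕ, ∀ k, 0 < R k ∧ (k + 1) * (∑ j ∈ range k, R j * a j + b k) ≤ R k := by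
  let next : ℕ → ℝ → ℕ := fun k p => ⌈((k : ℝ) + 1) * (p + b k)⌉₊ + 1
  -- `P k` is the partial sum `∑ j < k, R j * a j`, built together with `R k = next k (P k)`.
  let P : ℕ → ℝ := fun k => Nat.rec 0 (fun k p => p + next k p * a k) k
  have hP : ∀ k, P k = ∑ j ∈ range k, next j (P j) * a j := by
    intro k
    induction k with
    | zero => simp [P]
    | succ k ih => rw [sum_range_succ, ← ih]
  refine ⟨fun k => next k (P k), fun k => ⟨Nat.succ_pos _, ?_⟩⟩
  rw [← hP]
  exact (Nat.le_ceil _).trans (Nat.cast_le.mpr (Nat.le_succ _))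

theorem sum_range_sub_div (a : ℕ → ℝ) (s : ℝ) {n : ℕ} (hn : n ≠ 0) :
    (∑ i ∈ range n, (a i - s)) / n = (∑ i ∈ range n, a i) / n - s := by
  rw [sum_sub_distrib, sum_const, card_range, nsmul_eq_mul, sub_div, mul_div_cancel_left₀]
  exact Nat.cast_ne_zero.mpr hn

/-- If `(γₖ)ₖ` is a sequence of loops at a vertex `α` of a directed graph
with integer edge weights whose rotation numbers `W(γₖ)/L(γₖ)` converge to a real
number `s`, then there is an infinite path starting at `α`, passing through `α`
infinitely many times, whose rotation number exists and equals `s`. -/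
theorem infinite_path_of_loops {V : Type*} (Adj : V → V → Prop) (W : V → V → ℤ)
    (α : V) (g : ℕ → ℕ → V) (L : ℕ → ℕ) (hL : ∀ k, 0 < L k)
    (hg0 : ∀ k, g k 0 = α) (hgn : ∀ k, g k (L k) = α)
    (hgadj : ∀ k, ∀ i < L k, Adj (g k i) (g k (i + 1)))
    (s : ℝ)
    (hconv : Tendsto
      (fun k => ((∑ i ∈ Finset.range (L k), W (g k i) (g k (i + 1)) : ℤ) : ℝ) / (L k : ℝ))
      atTop (𝓝 s)) :
    ∃ f : ℕ → V, f 0 = α ∧ (∀ n, Adj (f n) (f (n + 1))) ∧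
      {n : ℕ | f n = α}.Infinite ∧
      Tendsto (fun n => ((∑ i ∈ Finset.range n, W (f i) (f (i + 1)) : ℤ) : ℝ) / (n : ℝ))
        atTop (𝓝 s) := by
  set F : V → V → ℝ := fun u v => W u v - s
  set ε : ℕ → ℝ := fun k => |(∑ j ∈ range (L k), F (g k j) (g k (j + 1))) / L k|
  set B : ℕ → ℝ := fun k => ∑ j ∈ range (L k), |F (g k j) (g k (j + 1))|
  have hε : Tendsto ε atTop (𝓝 0) := by
    have h := (hconv.sub_const s).abs
    rw [sub_self, abs_zero] at h
    refine h.congr fun k => ?_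
    simp only [ε, F, sum_range_sub_div _ s (hL k).ne', Int.cast_sum]
  obtain ⟨R, hR⟩ := exists_pos_seq_ge_partial_sum (fun k => L k * ε k)
    fun k => ∑ j ∈ range (k + 2), B j
  have hRpos : ∀ k, 0 < R k := fun k => (hR k).1
  refine ⟨concatPowers g L R, by simpa using concatPowers_blockStart hL hRpos hg0 0,
    concatPowers_adj hL hRpos hg0 hgn hgadj,
    Set.infinite_of_injective_forall_mem
      (strictMono_sum_range fun k => Nat.mul_pos (hRpos k) (hL k)).injective
      (concatPowers_blockStart hL hRpos hg0), ?_⟩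
  rw [← tendsto_sub_nhds_zero_iff]
  refine (tendsto_sum_range_div_of_blocks (x := fun i => F (concatPowers g L R i)
      (concatPowers g L R (i + 1))) (ℓ := fun k => R k * L k) (B := B)
      (fun k => Nat.mul_pos (hRpos k) (hL k)) (fun k => abs_nonneg _) hε ?_ ?_).congr' ?_
  · intro k m hm
    rw [sum_concatPowers_edges F hL hRpos hg0 hgn hm]
    exact abs_sum_range_mod_le (fun j => F (g k j) (g k (j + 1))) (hL k) m
  · intro k
    simpa only [Nat.cast_mul, mul_assoc] using
      (hR k).2.trans (Nat.cast_le.mpr (Nat.le_mul_of_pos_right (R k) (hL k)))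
  · filter_upwards [eventually_ne_atTop 0] with n hn
    simp only [F, sum_range_sub_div _ s hn, Int.cast_sum]
end

section
/- Let F be a sun-like map with basic partition 𝒫 of the union of branches X. For A₀, …, Aₙ ∈ 𝒫 the set ⟨A₀A₁…Aₙ⟩ := F^n({x : ∀ i ≤ n, F^i(x) ∈ A_i + ℤ}) ∩ X satisfies ⟨A₀…Aₙ⟩ = F(⟨A₀…A_{n−1}⟩ − p(A_{n−1})) ∩ Aₙ, and ⟨A₀…Aₙ⟩ is either empty or a closed subinterval of Aₙ containing min Aₙ. -/
open Set Filter Topology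

/-- An abstract "sun-like" setting: a lifted graph `T` (metric space with a
translation `τ`, an embedded real line and its retraction `rR`), together with a
degree-one continuous map `F` whose set `X = closure(T ∖ T_ℝ) ∩ rR⁻¹[0,1)` is a
finite disjoint union of compact intervals (the branches), each attached to the
invariant set `T_ℝ` at its minimum endpoint. Branches are parametrized by
order-embeddings `emb i : [0, len i] → T`. -/
structure SunLike (T : Type) [MetricSpace T] where
  /-- the translation `x ↦ x + 1`, a homeomorphism -/
  τ : Equiv.Perm T
  τ_cont : Continuous τ
  τ_symm_cont : Continuous τ.symm
  dist_inv : ∀ x y : T, dist (τ x) (τ y) = dist x y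
  /-- the continuous degree-one map -/
  F : T → T
  F_cont : Continuous F
  deg1 : ∀ x, F (τ x) = τ (F x)
  /-- the embedded copy of `ℝ` -/
  line : ℝ → T
  line_cont : Continuous line
  line_inj : Function.Injective line
  line_tau : ∀ s, τ (line s) = line (s + 1)
  /-- the natural retraction `r_ℝ : T → ℝ` -/
  rR : T → ℝ
  rR_cont : Continuous rR
  rR_line : ∀ s, rR (line s) = s
  rR_tau : ∀ x, rR (τ x) = rR x + 1
  /-- `T_ℝ = closure (⋃ n, F^n(ℝ))` -/
  TR : Set T
  TR_def : TR = closure (⋃ n : ℕ, F^[n] '' Set.range line)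
  TR_inv : Set.MapsTo F TR TR
  /-- finitely many branches -/
  Λ : Type
  Λfin : Finite Λ
  len : Λ → ℝ
  len_pos : ∀ i, 0 < len i
  /-- parametrization of the branch `Xⁱ` by the interval `[0, len i]` -/
  emb : Λ → ℝ → T
  emb_cont : ∀ i, ContinuousOn (emb i) (Set.Icc 0 (len i))
  emb_inj : ∀ i, Set.InjOn (emb i) (Set.Icc 0 (len i))
  /-- the attachment point `min Xⁱ = emb i 0` lies in `T_ℝ` -/
  attach_mem : ∀ i, emb i 0 ∈ TR
  /-- a branch meets `T_ℝ` exactly at its minimum endpoint -/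
  branch_inter_TR : ∀ i, (emb i '' Set.Icc 0 (len i)) ∩ TR = {emb i 0}
  branch_open : ∀ i, IsOpen (emb i '' Set.Ioc 0 (len i))
  /-- `X = closure(T ∖ T_ℝ) ∩ r_ℝ⁻¹([0,1))` is the union of the branches -/
  branches_def : closure (TRᶜ) ∩ rR ⁻¹' Set.Ico (0 : ℝ) 1 = ⋃ i, emb i '' Set.Icc 0 (len i)
  /-- distinct integer translates of branches are disjoint -/
  translates_disjoint : ∀ i j : Λ, ∀ p q : ℤ, (i ≠ j ∨ p ≠ q) →
    Disjoint ((τ ^ p) '' (emb i '' Set.Icc 0 (len i))) ((τ ^ q) '' (emb j '' Set.Icc 0 (len j)))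
  /-- the natural retraction onto the branch `Xⁱ` -/
  ret : Λ → T → T
  ret_cont : ∀ i, Continuous (ret i)
  ret_id : ∀ i, ∀ x ∈ emb i '' Set.Icc 0 (len i), ret i x = x
  ret_out : ∀ i x, x ∉ emb i '' Set.Icc 0 (len i) → ret i x = emb i 0

namespace SunLike

variable {T : Type} [MetricSpace T] (S : SunLike T)

/-- the branch `Xⁱ` -/
def branch (i : S.Λ) : Set T := S.emb i '' Set.Icc 0 (S.len i)

/-- `min Xⁱ`, the attachment point of the branch `Xⁱ` -/
def minB (i : S.Λ) : T := S.emb i 0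

/-- `X`, the union of the branches -/
def X : Set T := ⋃ i, S.branch i

/-- `X + ℤ`, the union of all integer translates of the branches -/
def XZ : Set T := ⋃ p : ℤ, (S.τ ^ p) '' S.X

/-- `X^∞`: points of `X` whose whole orbit stays in `X + ℤ` -/
def Xinf : Set T := {x | x ∈ S.X ∧ ∀ n : ℕ, S.F^[n] x ∈ S.XZ}

/-- the order of the branch `Xⁱ` (minimum at the attachment point) -/
def ble (i : S.Λ) (x y : T) : Prop :=
  ∃ s t : ℝ, s ∈ Set.Icc 0 (S.len i) ∧ t ∈ Set.Icc 0 (S.len i) ∧ s ≤ t ∧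
    S.emb i s = x ∧ S.emb i t = y

/-- `I ⊂ Xⁱ` positively `F^n`-covers `J + p`, where `J ⊂ Xʲ`: there are `x ≤ y` in `I`
with `r_j(F^n(x) - p) ≤ min J` and `max J ≤ r_j(F^n(y) - p)`. -/
def PosCover (n : ℕ) (i j : S.Λ) (I J : Set T) (p : ℤ) : Prop :=
  ∃ x y, x ∈ I ∧ y ∈ I ∧ S.ble i x y ∧
    (∀ z ∈ J, S.ble j (S.ret j ((S.τ ^ (-p)) (S.F^[n] x))) z) ∧
    (∀ z ∈ J, S.ble j z (S.ret j ((S.τ ^ (-p)) (S.F^[n] y))))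

/-- `rot S x s` : the rotation number of `x` exists and equals `s` -/
def rot (x : T) (s : ℝ) : Prop :=
  Tendsto (fun n : ℕ => (S.rR (S.F^[n] x) - S.rR x) / (n : ℝ)) atTop (𝓝 s)

end SunLike

/-- The basic partition `𝒫` of the branches of a sun-like map: finitely many disjoint
compact subintervals `A = [lo A, hi A] ⊂ X^{bi A}` with `F(A) ⊆ (X^{ℓ(A)} + p(A)) ∪ int T_ℝ`,
`F(min A) = min X^{ℓ(A)} + p(A) ∈ T_ℝ`, and such that every point of `X` whose image lies
in `X + ℤ` belongs to some element of `𝒫`. -/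
structure BasicPartition {T : Type} [MetricSpace T] (S : SunLike T) where
  P : Type
  Pfin : Fintype P
  bi : P → S.Λ
  lo : P → ℝ
  hi : P → ℝ
  lo_mem : ∀ A, lo A ∈ Set.Icc 0 (S.len (bi A))
  hi_mem : ∀ A, hi A ∈ Set.Icc 0 (S.len (bi A))
  lo_le_hi : ∀ A, lo A ≤ hi A
  ℓv : P → S.Λ
  pw : P → ℤ
  disj : ∀ A B : P, A ≠ B →
    Disjoint (S.emb (bi A) '' Set.Icc (lo A) (hi A)) (S.emb (bi B) '' Set.Icc (lo B) (hi B))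
  maps : ∀ A, S.F '' (S.emb (bi A) '' Set.Icc (lo A) (hi A)) ⊆
    (S.τ ^ pw A) '' S.branch (ℓv A) ∪ interior S.TR
  min_maps : ∀ A, S.F (S.emb (bi A) (lo A)) = (S.τ ^ pw A) (S.minB (ℓv A))
  min_maps_TR : ∀ A, S.F (S.emb (bi A) (lo A)) ∈ S.TR
  complete : ∀ x ∈ S.X, S.F x ∈ S.XZ → ∃ A, x ∈ S.emb (bi A) '' Set.Icc (lo A) (hi A)

namespace BasicPartition

variable {T : Type} [MetricSpace T] {S : SunLike T} (Q : BasicPartition S)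

/-- the element `A` of the partition, as a subset of `T` -/
def Aset (A : Q.P) : Set T := S.emb (Q.bi A) '' Set.Icc (Q.lo A) (Q.hi A)

/-- `x ∈ A + ℤ` -/
def memZ (x : T) (A : Q.P) : Prop := ∃ m : ℤ, x ∈ (S.τ ^ m) '' Q.Aset A

/-- `x ∈ X^∞` has itinerary `(Aₙ)` when `F^n(x) ∈ Aₙ + ℤ` for all `n` -/
def Itinerary (x : T) (A : ℕ → Q.P) : Prop := ∀ n : ℕ, Q.memZ (S.F^[n] x) (A n)

/-- The set `⟨A₀…Aₙ⟩ := F^n {x : ∀ i ≤ n, F^i(x) ∈ A_i + ℤ} ∩ X`, for a word stored in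
reverse: the list `[Aₙ, …, A₀]` represents the word `A₀…Aₙ`. -/
def cylL (w : List Q.P) : Set T :=
  S.F^[w.length - 1] ''
      {x | ∀ i, ∀ _ : i < w.length,
        Q.memZ (S.F^[i] x) (w.get ⟨w.length - 1 - i, by omega⟩)} ∩ S.X

/-- the partition element corresponding to the last letter of a word (stored in reverse) -/
def AsetW : List Q.P → Set T
  | [] => ∅
  | A :: _ => Q.Aset A

/-- the equivalence `A₀…Aₙ ∼ B₀…B_m` between words (stored in reverse):
the last `k+1` letters agree and `⟨A₀…A_{n-k}⟩ = A_{n-k} = B_{m-k} = ⟨B₀…B_{m-k}⟩`. -/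
def equivW (w w' : List Q.P) : Prop :=
  ∃ k : ℕ, k + 1 ≤ w.length ∧ k + 1 ≤ w'.length ∧ w.take (k + 1) = w'.take (k + 1) ∧
    Q.cylL (w.drop k) = Q.AsetW (w.drop k) ∧ Q.cylL (w'.drop k) = Q.AsetW (w'.drop k)

/-- the height `H(α)`: the length of the significant part of the word `w`,
i.e. the least `k` such that `w` is equivalent to its suffix of length `k+1`. -/
noncomputable def height (w : List Q.P) : ℕ := sInf {k | Q.equivW w (w.take (k + 1))}

/-- the word `A₀…Aₙ` of the first `n+1` symbols of an itinerary, stored in reverse -/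
def wrd (A : ℕ → Q.P) (n : ℕ) : List Q.P := ((List.range (n + 1)).map A).reverse

/-- the weight `p(A)` of any arrow leaving a vertex `α` with `⟨α⟩ ⊂ A` -/
def pwW : List Q.P → ℤ
  | [] => 0
  | A :: _ => Q.pw A

end BasicPartition
section Aux

namespace SunLike

variable {T : Type} [MetricSpace T] (S : SunLike T)

lemma tau_add (a b : ℤ) (x : T) : (S.τ ^ (a + b)) x = (S.τ ^ a) ((S.τ ^ b) x) := by
  rw [zpow_add]; rfl

lemma tau_neg_cancel (m : ℤ) (x : T) : (S.τ ^ (-m)) ((S.τ ^ m) x) = x := by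
  rw [← tau_add]; simp

lemma F_tau_symm (x : T) : S.F (S.τ.symm x) = S.τ.symm (S.F x) := by
  have h := S.deg1 (S.τ.symm x)
  rw [Equiv.apply_symm_apply] at h
  rw [h, Equiv.symm_apply_apply]

lemma F_tau_zpow (m : ℤ) (x : T) : S.F ((S.τ ^ m) x) = (S.τ ^ m) (S.F x) := by
  induction m using Int.induction_on generalizing x with
  | zero => simp
  | succ n ih =>
      have h1 : ∀ y : T, (S.τ ^ ((n : ℤ) + 1)) y = (S.τ ^ (n : ℤ)) (S.τ y) := by
        intro y; rw [zpow_add]; rfl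
      rw [h1, ih, S.deg1, ← h1]
  | pred n ih =>
      have h1 : ∀ y : T, (S.τ ^ (-(n : ℤ) - 1)) y = (S.τ ^ (-(n : ℤ))) (S.τ.symm y) := by
        intro y; rw [sub_eq_add_neg, zpow_add]; rfl
      rw [h1, ih, F_tau_symm, ← h1]

lemma F_iter_zpow (m : ℤ) (k : ℕ) (x : T) :
    S.F^[k] ((S.τ ^ m) x) = (S.τ ^ m) (S.F^[k] x) := by
  induction k generalizing x with
  | zero => simp
  | succ n ih => rw [Function.iterate_succ_apply, S.F_tau_zpow, ih,
      Function.iterate_succ_apply]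

lemma F_iter_tau (k : ℕ) (x : T) : S.F^[k] (S.τ x) = S.τ (S.F^[k] x) := by
  induction k generalizing x with
  | zero => simp
  | succ n ih => rw [Function.iterate_succ_apply, S.deg1, ih, Function.iterate_succ_apply]

lemma F_iter_tau_symm (k : ℕ) (x : T) : S.F^[k] (S.τ.symm x) = S.τ.symm (S.F^[k] x) := by
  induction k generalizing x with
  | zero => simp
  | succ n ih => rw [Function.iterate_succ_apply, S.F_tau_symm, ih,
      Function.iterate_succ_apply]

lemma tau_pow_cont (m : ℤ) : Continuous ⇑(S.τ ^ m) := by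
  induction m using Int.induction_on with
  | zero => simpa using continuous_id
  | succ n ih =>
      have h1 : ⇑(S.τ ^ ((n : ℤ) + 1)) = ⇑(S.τ ^ (n : ℤ)) ∘ ⇑S.τ := by
        funext y; rw [Function.comp_apply, zpow_add]; rfl
      rw [h1]; exact ih.comp S.τ_cont
  | pred n ih =>
      have h1 : ⇑(S.τ ^ (-(n : ℤ) - 1)) = ⇑(S.τ ^ (-(n : ℤ))) ∘ ⇑S.τ.symm := by
        funext y; rw [Function.comp_apply, sub_eq_add_neg, zpow_add]; rfl
      rw [h1]; exact ih.comp S.τ_symm_cont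

/-- `τ^m` as a homeomorphism -/
noncomputable def tauHomeo (m : ℤ) : T ≃ₜ T where
  toEquiv := (S.τ ^ m : Equiv.Perm T)
  continuous_toFun := S.tau_pow_cont m
  continuous_invFun := by
    have h : ((S.τ ^ m : Equiv.Perm T)).symm = (S.τ ^ (-m) : Equiv.Perm T) := by
      rw [zpow_neg, ← Equiv.Perm.inv_def]
    show Continuous ⇑(S.τ ^ m).symm
    rw [h]; exact S.tau_pow_cont (-m)

lemma tau_mapsTo_TR : Set.MapsTo ⇑S.τ S.TR S.TR := by
  intro x hx
  rw [S.TR_def] at hx ⊢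
  have himg : ⇑S.τ '' (⋃ n : ℕ, S.F^[n] '' Set.range S.line) ⊆
      ⋃ n : ℕ, S.F^[n] '' Set.range S.line := by
    rintro _ ⟨y, hy, rfl⟩
    obtain ⟨n, hn⟩ := Set.mem_iUnion.mp hy
    obtain ⟨_, ⟨s, rfl⟩, rfl⟩ := hn
    exact Set.mem_iUnion.mpr ⟨n, ⟨S.line (s + 1), ⟨s + 1, rfl⟩, by
      rw [← S.line_tau, S.F_iter_tau]⟩⟩
  exact (calc ⇑S.τ '' closure (⋃ n : ℕ, S.F^[n] '' Set.range S.line)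
      ⊆ closure (⇑S.τ '' (⋃ n : ℕ, S.F^[n] '' Set.range S.line)) :=
        image_closure_subset_closure_image S.τ_cont
    _ ⊆ closure (⋃ n : ℕ, S.F^[n] '' Set.range S.line) := closure_mono himg)
    ⟨x, hx, rfl⟩

lemma tau_symm_mapsTo_TR : Set.MapsTo ⇑S.τ.symm S.TR S.TR := by
  intro x hx
  rw [S.TR_def] at hx ⊢
  have himg : ⇑S.τ.symm '' (⋃ n : ℕ, S.F^[n] '' Set.range S.line) ⊆
      ⋃ n : ℕ, S.F^[n] '' Set.range S.line := by
    rintro _ ⟨y, hy, rfl⟩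
    obtain ⟨n, hn⟩ := Set.mem_iUnion.mp hy
    obtain ⟨_, ⟨s, rfl⟩, rfl⟩ := hn
    refine Set.mem_iUnion.mpr ⟨n, ⟨S.line (s - 1), ⟨s - 1, rfl⟩, ?_⟩⟩
    have hls : S.τ.symm (S.line s) = S.line (s - 1) := by
      have := S.line_tau (s - 1)
      rw [sub_add_cancel] at this
      rw [← this, Equiv.symm_apply_apply]
    rw [← hls, S.F_iter_tau_symm]
  exact (calc ⇑S.τ.symm '' closure (⋃ n : ℕ, S.F^[n] '' Set.range S.line)
      ⊆ closure (⇑S.τ.symm '' (⋃ n : ℕ, S.F^[n] '' Set.range S.line)) :=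
        image_closure_subset_closure_image S.τ_symm_cont
    _ ⊆ closure (⋃ n : ℕ, S.F^[n] '' Set.range S.line) := closure_mono himg)
    ⟨x, hx, rfl⟩

lemma tau_pow_mapsTo_TR (m : ℤ) : Set.MapsTo ⇑(S.τ ^ m) S.TR S.TR := by
  induction m using Int.induction_on with
  | zero => intro x hx; simpa using hx
  | succ n ih =>
      intro x hx
      have h1 : (S.τ ^ ((n : ℤ) + 1)) x = (S.τ ^ (n : ℤ)) (S.τ x) := by
        rw [zpow_add]; rfl
      rw [h1]; exact ih (S.tau_mapsTo_TR hx)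
  | pred n ih =>
      intro x hx
      have h1 : (S.τ ^ (-(n : ℤ) - 1)) x = (S.τ ^ (-(n : ℤ))) (S.τ.symm x) := by
        rw [sub_eq_add_neg, zpow_add]; rfl
      rw [h1]; exact ih (S.tau_symm_mapsTo_TR hx)

lemma tau_pow_image_TR (m : ℤ) : ⇑(S.τ ^ m) '' S.TR = S.TR := by
  apply Set.Subset.antisymm
  · exact Set.image_subset_iff.mpr (S.tau_pow_mapsTo_TR m)
  · intro x hx
    exact ⟨(S.τ ^ (-m)) x, S.tau_pow_mapsTo_TR (-m) hx, by
      have := S.tau_neg_cancel (-m) x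
      simp only [neg_neg] at this
      exact this⟩

lemma tau_int_TR (m : ℤ) {x : T} (hx : x ∈ interior S.TR) :
    (S.τ ^ m) x ∈ interior S.TR := by
  have h1 : (S.tauHomeo m) '' interior S.TR = interior ((S.tauHomeo m) '' S.TR) :=
    Homeomorph.image_interior _ _
  have h2 : (S.tauHomeo m) '' S.TR = S.TR := S.tau_pow_image_TR m
  have : (S.τ ^ m) x ∈ (S.tauHomeo m) '' interior S.TR := ⟨x, hx, rfl⟩
  rw [h1, h2] at this
  exact this

lemma branch_subset_X (i : S.Λ) : S.branch i ⊆ S.X := Set.subset_iUnion _ i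

lemma branch_subset_closure (i : S.Λ) : S.branch i ⊆ closure S.TRᶜ := by
  intro x hx
  have hx2 : x ∈ ⋃ j, S.emb j '' Set.Icc 0 (S.len j) := Set.mem_iUnion.mpr ⟨i, hx⟩
  rw [← S.branches_def] at hx2
  exact hx2.1

lemma branch_disjoint_int (i : S.Λ) (x : T) (hx : x ∈ S.branch i) :
    x ∉ interior S.TR := by
  intro hint
  have hcl : x ∈ closure S.TRᶜ := S.branch_subset_closure i hx
  rw [mem_closure_iff] at hcl
  obtain ⟨y, hy1, hy2⟩ := hcl (interior S.TR) isOpen_interior hint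
  exact hy2 (interior_subset hy1)

lemma branch_eq_of_mem {i j : S.Λ} {m : ℤ} {x : T} (hxi : x ∈ S.branch i)
    (hxj : x ∈ ⇑(S.τ ^ m) '' S.branch j) : i = j ∧ m = 0 := by
  by_contra h
  have hcase : i ≠ j ∨ (0 : ℤ) ≠ m := by
    by_cases hij : i = j
    · right; intro hm; exact h ⟨hij, hm.symm⟩
    · left; exact hij
  have hd := S.translates_disjoint i j 0 m hcase
  have hxi' : x ∈ ⇑(S.τ ^ (0 : ℤ)) '' (S.emb i '' Set.Icc 0 (S.len i)) :=
    ⟨x, hxi, by simp⟩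
  exact Set.disjoint_left.mp hd hxi' hxj

end SunLike

namespace BasicPartition

variable {T : Type} [MetricSpace T] {S : SunLike T} (Q : BasicPartition S)

lemma Aset_subset_branch (B : Q.P) : Q.Aset B ⊆ S.branch (Q.bi B) :=
  Set.image_mono (Set.Icc_subset_Icc (Q.lo_mem B).1 (Q.hi_mem B).2)

lemma Aset_subset_X (B : Q.P) : Q.Aset B ⊆ S.X :=
  (Q.Aset_subset_branch B).trans (S.branch_subset_X _)

lemma memZ_tau (m : ℤ) {x : T} {B : Q.P} (h : Q.memZ x B) :
    Q.memZ ((S.τ ^ m) x) B := by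
  obtain ⟨k, a, ha, rfl⟩ := h
  exact ⟨m + k, a, ha, S.tau_add m k a⟩

lemma memZ_of_Aset {x : T} {B : Q.P} (h : x ∈ Q.Aset B) : Q.memZ x B :=
  ⟨0, x, h, by simp⟩

lemma memZ_X {x : T} {B : Q.P} (hx : x ∈ S.X) (h : Q.memZ x B) : x ∈ Q.Aset B := by
  obtain ⟨i, hxi⟩ := Set.mem_iUnion.mp hx
  obtain ⟨m, a, ha, rfl⟩ := h
  have hj : (S.τ ^ m) a ∈ ⇑(S.τ ^ m) '' S.branch (Q.bi B) :=
    ⟨a, Q.Aset_subset_branch B ha, rfl⟩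
  obtain ⟨_, hm⟩ := S.branch_eq_of_mem hxi hj
  subst hm
  simpa using ha

/-- the cylinder `⟨A₀…Aₙ⟩` -/
def cylSet (A : ℕ → Q.P) (n : ℕ) : Set T :=
  S.F^[n] '' {x | ∀ i ≤ n, Q.memZ (S.F^[i] x) (A i)} ∩ S.X

theorem cyl_rec (A : ℕ → Q.P) (m : ℕ) :
    Q.cylSet A (m + 1) =
      S.F '' (⇑(S.τ ^ (-(Q.pw (A m)))) '' Q.cylSet A m) ∩ Q.Aset (A (m + 1)) := by
  ext y
  constructor
  · rintro ⟨⟨x, hx, rfl⟩, hyX⟩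
    have hyA : S.F^[m + 1] x ∈ Q.Aset (A (m + 1)) :=
      Q.memZ_X hyX (hx (m + 1) le_rfl)
    refine ⟨?_, hyA⟩
    obtain ⟨mm, a, ha, hax⟩ := hx m (Nat.le_succ m)
    have hwX : a ∈ S.X := Q.Aset_subset_X _ ha
    have hwcyl : a ∈ Q.cylSet A m := by
      refine ⟨⟨(S.τ ^ (-mm)) x, ?_, ?_⟩, hwX⟩
      · intro i hi
        rw [S.F_iter_zpow]
        exact Q.memZ_tau _ (hx i (hi.trans (Nat.le_succ m)))
      · rw [S.F_iter_zpow, ← hax, S.tau_neg_cancel]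
    have hFa := Q.maps (A m) ⟨a, ha, rfl⟩
    have hyeq : S.F^[m + 1] x = (S.τ ^ mm) (S.F a) := by
      rw [Function.iterate_succ_apply', ← hax, S.F_tau_zpow]
    rcases hFa with ⟨u, hu, hua⟩ | hint
    · have hy2 : S.F^[m + 1] x ∈ ⇑(S.τ ^ (mm + Q.pw (A m))) '' S.branch (Q.ℓv (A m)) :=
        ⟨u, hu, by rw [S.tau_add, hua, ← hyeq]⟩
      obtain ⟨_, hm0⟩ := S.branch_eq_of_mem (Q.Aset_subset_branch _ hyA) hy2
      have hmm : mm = -Q.pw (A m) := by omega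
      refine ⟨(S.τ ^ (-Q.pw (A m))) a, ⟨a, hwcyl, rfl⟩, ?_⟩
      rw [S.F_tau_zpow, ← hmm, ← hyeq]
    · exfalso
      have : S.F^[m + 1] x ∈ interior S.TR := hyeq ▸ S.tau_int_TR mm hint
      exact S.branch_disjoint_int _ _ (Q.Aset_subset_branch _ hyA) this
  · rintro ⟨⟨w', ⟨w, hw, rfl⟩, rfl⟩, hyA⟩
    obtain ⟨⟨x, hx, rfl⟩, hwX⟩ := hw
    have hyeq : S.F ((S.τ ^ (-Q.pw (A m))) (S.F^[m] x)) =
        S.F^[m + 1] ((S.τ ^ (-Q.pw (A m))) x) := by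
      rw [Function.iterate_succ_apply', S.F_iter_zpow]
    refine ⟨⟨(S.τ ^ (-Q.pw (A m))) x, ?_, hyeq.symm⟩, Q.Aset_subset_X _ hyA⟩
    intro i hi
    rcases Nat.lt_or_ge i (m + 1) with h | h
    · have hi' : i ≤ m := by omega
      rw [S.F_iter_zpow]
      exact Q.memZ_tau _ (hx i hi')
    · have hi' : i = m + 1 := by omega
      subst hi'
      rw [← hyeq]
      exact Q.memZ_of_Aset hyA

theorem cyl_struct (A : ℕ → Q.P) (n : ℕ) :
    Q.cylSet A n = ∅ ∨ ∃ c ∈ Set.Icc (Q.lo (A n)) (Q.hi (A n)),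
      Q.cylSet A n = S.emb (Q.bi (A n)) '' Set.Icc (Q.lo (A n)) c := by
  induction n with
  | zero =>
      right
      refine ⟨Q.hi (A 0), ⟨Q.lo_le_hi _, le_refl _⟩, ?_⟩
      have h0 : Q.cylSet A 0 = Q.Aset (A 0) := by
        ext x
        constructor
        · rintro ⟨⟨z, hz, rfl⟩, hxX⟩
          exact Q.memZ_X hxX (hz 0 le_rfl)
        · intro hx
          exact ⟨⟨x, fun i hi => by
            interval_cases i
            exact Q.memZ_of_Aset hx, rfl⟩, Q.Aset_subset_X _ hx⟩
      exact h0
  | succ k ih =>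
      rw [Q.cyl_rec A k]
      rcases ih with h | ⟨c, hc, h⟩
      · left; rw [h]; simp
      · -- the interesting case
        set ℓ : S.Λ := Q.ℓv (A k) with hℓ
        set p : ℤ := Q.pw (A k) with hp
        have hbc : Set.Icc (Q.lo (A k)) c ⊆ Set.Icc 0 (S.len (Q.bi (A k))) :=
          Set.Icc_subset_Icc (Q.lo_mem _).1 (hc.2.trans (Q.hi_mem _).2)
        set K : Set T := S.emb (Q.bi (A k)) '' Set.Icc (Q.lo (A k)) c with hKdef
        have hKA : K ⊆ Q.Aset (A k) :=
          Set.image_mono (Set.Icc_subset_Icc le_rfl hc.2)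
        have hKcomp : IsCompact K :=
          (isCompact_Icc).image_of_continuousOn ((S.emb_cont _).mono hbc)
        have hKconn : IsPreconnected K :=
          (isPreconnected_Icc).image _ ((S.emb_cont _).mono hbc)
        set G : T → T := fun y => S.F ((S.τ ^ (-p)) y) with hGdef
        have hGcont : Continuous G := S.F_cont.comp (S.tau_pow_cont (-p))
        set Y : Set T := G '' K with hYdef
        have himg : S.F '' (⇑(S.τ ^ (-p)) '' Q.cylSet A k) = Y := by
          rw [h, hYdef, Set.image_image]
        have hGTR : ∀ a ∈ K, G a ∈ S.branch ℓ ∪ interior S.TR := by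
          intro a haK
          have haA : a ∈ Q.Aset (A k) := hKA haK
          have hFa := Q.maps (A k) ⟨a, haA, rfl⟩
          have hGa : G a = (S.τ ^ (-p)) (S.F a) := by
            rw [hGdef]; exact S.F_tau_zpow (-p) a
          rcases hFa with ⟨u, hu, hua⟩ | hint
          · left; rw [hGa, ← hua, ← hp, S.tau_neg_cancel]; exact hu
          · right; rw [hGa]; exact S.tau_int_TR (-p) hint
        have hYsub : Y ⊆ S.branch ℓ ∪ interior S.TR := by
          rintro _ ⟨a, haK, rfl⟩; exact hGTR a haK
        have hminY : S.emb ℓ 0 ∈ Y := by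
          refine ⟨S.emb (Q.bi (A k)) (Q.lo (A k)), ⟨Q.lo (A k), ⟨le_rfl, hc.1⟩, rfl⟩, ?_⟩
          rw [hGdef]
          show S.F ((S.τ ^ (-p)) (S.emb (Q.bi (A k)) (Q.lo (A k)))) = S.emb ℓ 0
          rw [S.F_tau_zpow, Q.min_maps, ← hp, S.tau_neg_cancel]
          rfl
        have hYcomp : IsCompact Y := hKcomp.image hGcont
        have hYclosed : IsClosed Y := hYcomp.isClosed
        have hYconn : IsPreconnected Y := hKconn.image _ hGcont.continuousOn
        set D : Set ℝ := Set.Icc 0 (S.len ℓ) ∩ (S.emb ℓ) ⁻¹' Y with hDdef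
        have hD0 : (0 : ℝ) ∈ D := ⟨⟨le_refl _, (S.len_pos ℓ).le⟩, hminY⟩
        -- downward closedness via connectivity
        have hDdown : ∀ t ∈ D, ∀ s : ℝ, 0 ≤ s → s ≤ t → s ∈ D := by
          intro t ht s hs0 hst
          have hslen : s ≤ S.len ℓ := hst.trans ht.1.2
          refine ⟨⟨hs0, hslen⟩, ?_⟩
          by_contra hsY
          have hst' : s < t := lt_of_le_of_ne hst (fun hh => hsY (by rw [hh]; exact ht.2))
          have hs0' : 0 < s := lt_of_le_of_ne hs0 (fun hh => hsY (by rw [← hh]; exact hD0.2))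
          have hinj := S.emb_inj ℓ
          have hcomp1 : IsCompact (S.emb ℓ '' Set.Icc 0 s) :=
            (isCompact_Icc).image_of_continuousOn
              ((S.emb_cont _).mono (Set.Icc_subset_Icc le_rfl hslen))
          have hcomp2 : IsCompact (S.emb ℓ '' Set.Icc s (S.len ℓ)) :=
            (isCompact_Icc).image_of_continuousOn
              ((S.emb_cont _).mono (Set.Icc_subset_Icc hs0 le_rfl))
          have hUdef : S.emb ℓ '' Set.Ioc s (S.len ℓ) =
              (S.emb ℓ '' Set.Ioc 0 (S.len ℓ)) \ (S.emb ℓ '' Set.Icc 0 s) := by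
            ext y
            constructor
            · rintro ⟨u, ⟨hu1, hu2⟩, rfl⟩
              refine ⟨⟨u, ⟨hs0'.trans hu1, hu2⟩, rfl⟩, ?_⟩
              rintro ⟨v, hv, hev⟩
              have hveq : v = u := hinj ⟨hv.1, hv.2.trans hslen⟩
                ⟨(hs0'.trans hu1).le, hu2⟩ hev
              have : v ≤ s := hv.2
              linarith
            · rintro ⟨⟨u, hu, rfl⟩, hnot⟩
              refine ⟨u, ⟨?_, hu.2⟩, rfl⟩
              by_contra hle
              push_neg at hle
              exact hnot ⟨u, ⟨hu.1.le, hle⟩, rfl⟩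
          have hUopen : IsOpen (S.emb ℓ '' Set.Ioc s (S.len ℓ)) := by
            rw [hUdef]; exact (S.branch_open ℓ).sdiff hcomp1.isClosed
          have hVopen : IsOpen ((S.emb ℓ '' Set.Icc s (S.len ℓ))ᶜ) :=
            hcomp2.isClosed.isOpen_compl
          have hsubbr : S.emb ℓ '' Set.Icc s (S.len ℓ) ⊆ S.branch ℓ :=
            Set.image_mono (Set.Icc_subset_Icc hs0 le_rfl)
          have hcover : Y ⊆ S.emb ℓ '' Set.Ioc s (S.len ℓ) ∪
              (S.emb ℓ '' Set.Icc s (S.len ℓ))ᶜ := by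
            intro y hy
            rcases hYsub hy with ⟨u, hu, rfl⟩ | hint
            · rcases lt_trichotomy u s with hus | hus | hus
              · right
                rintro ⟨v, hv, hev⟩
                have hveq : v = u := hinj ⟨hs0.trans hv.1, hv.2⟩ hu hev
                linarith [hv.1]
              · exact absurd hy (by rw [hus]; exact fun hyy => hsY hyy)
              · exact Or.inl ⟨u, ⟨hus, hu.2⟩, rfl⟩
            · right
              intro hmem
              exact S.branch_disjoint_int ℓ _ (hsubbr hmem) hint
          have hYU : (Y ∩ S.emb ℓ '' Set.Ioc s (S.len ℓ)).Nonempty :=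
            ⟨S.emb ℓ t, ht.2, ⟨t, ⟨hst', ht.1.2⟩, rfl⟩⟩
          have hYV : (Y ∩ (S.emb ℓ '' Set.Icc s (S.len ℓ))ᶜ).Nonempty := by
            refine ⟨S.emb ℓ 0, hminY, ?_⟩
            rintro ⟨v, hv, hev⟩
            have hveq : v = 0 := hinj ⟨hs0.trans hv.1, hv.2⟩
              ⟨le_refl _, (S.len_pos ℓ).le⟩ hev
            linarith [hv.1]
          obtain ⟨z, _, hzU, hzV⟩ := hYconn _ _ hUopen hVopen hcover hYU hYV
          exact hzV (Set.image_mono Set.Ioc_subset_Icc_self hzU)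
        have hDclosed : IsClosed D :=
          (S.emb_cont ℓ).preimage_isClosed_of_isClosed isClosed_Icc hYclosed
        have hDbdd : BddAbove D := ⟨S.len ℓ, fun t ht => ht.1.2⟩
        set d : ℝ := sSup D with hddef
        have hdD : d ∈ D := hDclosed.csSup_mem ⟨0, hD0⟩ hDbdd
        have hDeq : D = Set.Icc 0 d := by
          ext t
          constructor
          · intro ht; exact ⟨ht.1.1, le_csSup hDbdd ht⟩
          · intro ht; exact hDdown d hdD t ht.1 ht.2
        have hYbr : Y ∩ S.branch ℓ = S.emb ℓ '' Set.Icc 0 d := by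
          ext y
          constructor
          · rintro ⟨hyY, u, hu, rfl⟩
            exact ⟨u, by rw [← hDeq]; exact ⟨hu, hyY⟩, rfl⟩
          · rintro ⟨u, hu, rfl⟩
            have huD : u ∈ D := by rw [hDeq]; exact hu
            exact ⟨huD.2, ⟨u, huD.1, rfl⟩⟩
        rw [himg]
        by_cases hbi : Q.bi (A (k + 1)) = ℓ
        · have hAeq : Q.Aset (A (k + 1)) =
              S.emb ℓ '' Set.Icc (Q.lo (A (k + 1))) (Q.hi (A (k + 1))) := by
            rw [BasicPartition.Aset, hbi]
          have hAsub : Q.Aset (A (k + 1)) ⊆ S.branch ℓ := by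
            rw [hAeq]
            exact Set.image_mono (Set.Icc_subset_Icc (Q.lo_mem _).1 (by rw [← hbi]; exact (Q.hi_mem _).2))
          have hcyl : Y ∩ Q.Aset (A (k + 1)) =
              (S.emb ℓ '' Set.Icc 0 d) ∩ Q.Aset (A (k + 1)) := by
            rw [← hYbr]
            ext y
            exact ⟨fun ⟨h1, h2⟩ => ⟨⟨h1, hAsub h2⟩, h2⟩, fun ⟨h1, h2⟩ => ⟨h1.1, h2⟩⟩
          rw [hcyl, hAeq]
          have hinter : (S.emb ℓ '' Set.Icc 0 d) ∩
              (S.emb ℓ '' Set.Icc (Q.lo (A (k + 1))) (Q.hi (A (k + 1)))) =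
              S.emb ℓ '' (Set.Icc 0 d ∩ Set.Icc (Q.lo (A (k + 1))) (Q.hi (A (k + 1)))) := by
            refine (Set.InjOn.image_inter (S.emb_inj ℓ) ?_ ?_).symm
            · exact Set.Icc_subset_Icc le_rfl hdD.1.2
            · exact Set.Icc_subset_Icc (Q.lo_mem _).1 (by rw [← hbi]; exact (Q.hi_mem _).2)
          have hIcc : Set.Icc (0 : ℝ) d ∩ Set.Icc (Q.lo (A (k + 1))) (Q.hi (A (k + 1))) =
              Set.Icc (Q.lo (A (k + 1))) (min d (Q.hi (A (k + 1)))) := by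
            rw [Set.Icc_inter_Icc, max_eq_right (Q.lo_mem (A (k + 1))).1]
          rw [hinter, hIcc]
          by_cases hle : Q.lo (A (k + 1)) ≤ min d (Q.hi (A (k + 1)))
          · right
            exact ⟨min d (Q.hi (A (k + 1))), ⟨hle, min_le_right _ _⟩, by rw [hbi]⟩
          · left
            push_neg at hle
            rw [Set.Icc_eq_empty (not_le.mpr hle), Set.image_empty]
        · left
          rw [Set.eq_empty_iff_forall_notMem]
          rintro y ⟨hyY, hyA⟩
          have hybr : y ∈ S.branch (Q.bi (A (k + 1))) := Q.Aset_subset_branch _ hyA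
          rcases hYsub hyY with hbr | hint
          · refine hbi ?_
            have : y ∈ ⇑(S.τ ^ (0 : ℤ)) '' S.branch ℓ := ⟨y, hbr, by simp⟩
            exact (S.branch_eq_of_mem hybr this).1
          · exact S.branch_disjoint_int _ _ hybr hint

end BasicPartition

end Aux

/-- For `A₀, …, Aₙ` in the basic partition `𝒫` of a sun-like map `F`, the
set `⟨A₀A₁…Aₙ⟩ := F^n {x : ∀ i ≤ n, F^i(x) ∈ A_i + ℤ} ∩ X` satisfies
`⟨A₀…Aₙ⟩ = F(⟨A₀…A_{n-1}⟩ - p(A_{n-1})) ∩ Aₙ`, and `⟨A₀…Aₙ⟩` is either empty or a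
closed subinterval of `Aₙ` containing `min Aₙ`. -/
theorem cyl_recursion_and_interval {T : Type} [MetricSpace T] (S : SunLike T)
    (Q : BasicPartition S) (A : ℕ → Q.P) (n : ℕ) (hn : 1 ≤ n) :
    (S.F^[n] '' {x | ∀ i ≤ n, Q.memZ (S.F^[i] x) (A i)} ∩ S.X =
      S.F '' ((S.τ ^ (-(Q.pw (A (n - 1))))) ''
        (S.F^[n - 1] '' {x | ∀ i ≤ n - 1, Q.memZ (S.F^[i] x) (A i)} ∩ S.X)) ∩
      Q.Aset (A n)) ∧
    (S.F^[n] '' {x | ∀ i ≤ n, Q.memZ (S.F^[i] x) (A i)} ∩ S.X = ∅ ∨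
      ∃ c ∈ Set.Icc (Q.lo (A n)) (Q.hi (A n)),
        S.F^[n] '' {x | ∀ i ≤ n, Q.memZ (S.F^[i] x) (A i)} ∩ S.X =
          S.emb (Q.bi (A n)) '' Set.Icc (Q.lo (A n)) c) := by
  obtain ⟨m, rfl⟩ : ∃ m, n = m + 1 := ⟨n - 1, by omega⟩
  simp only [Nat.add_sub_cancel]
  exact ⟨Q.cyl_rec A m, Q.cyl_struct A (m + 1)⟩
end
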